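/- arXiv:2405.05009 — 2 statements merged into one kernel-verified Lean document; each statement's English description precedes it below -/
import Mathlib

section
/- Let f ∈ L^1[0,∞). For λ in the closed upper half-plane define Ψ(λ) = sup over x, s ≥ 0 of |∫ from min(s,x) to max(s,x) of f(t) e^{iλ|x-t|} dt|. Then Ψ is uniformly continuous on the closed upper half-plane, and Ψ(λ) → 0 as |λ| → ∞ within the closed upper half-plane. -/
/-!
Both claims rest on truncating at a large `T`. On the closed upper half-plane the kernel
`e^{iλ|x - t|}` has modulus at most `1`, and for `t ≤ T` it factors as
`e^{iλ|x - min x T|} e^{iλ|min x T - t|}`; hence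
`|ψ(s, x, λ)| ≤ ∫_T^∞ |f| + |ψ(min s T, min x T, λ)|`.
For `s, x ∈ [0, T]` the map `λ ↦ ψ(s, x, λ)` is Lipschitz with constant `T ‖f‖₁`, since
`|e^{iλr} - e^{iμr}| ≤ r |λ - μ|` there; this gives uniform continuity of `Ψ`.
For the decay, `f` is replaced on `[0, T]` by a smooth `h` close to it in `L¹`, and an
integration by parts against the primitive of the exponential bounds the contribution of `h`
by `(2 sup |h| + T sup |h'|) / |λ|`.
-/

open MeasureTheory Set Complex
open scoped Interval ContDiff

theorem norm_cexp_I_mul_le_one {lam : ℂ} (hl : 0 ≤ lam.im) {r : ℝ} (hr : 0 ≤ r) :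
    ‖cexp (I * lam * r)‖ ≤ 1 := by
  rw [norm_exp, Real.exp_le_one_iff]
  simp only [mul_re, mul_im, I_re, I_im, ofReal_re, ofReal_im]
  nlinarith

theorem norm_cexp_I_mul_sub_cexp_I_mul_le {lam mu : ℂ} (hl : 0 ≤ lam.im) (hm : 0 ≤ mu.im)
    {r : ℝ} (hr : 0 ≤ r) :
    ‖cexp (I * lam * r) - cexp (I * mu * r)‖ ≤ r * dist lam mu := by
  have hderiv : ∀ z ∈ {z : ℂ | 0 ≤ z.im},
      HasDerivWithinAt (fun z : ℂ => cexp (I * z * r)) (cexp (I * z * r) * (I * r))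
        {z : ℂ | 0 ≤ z.im} z := fun z _ =>
    (((hasDerivAt_id z).const_mul I).mul_const (r : ℂ)).cexp.hasDerivWithinAt.congr_deriv
      (by simp)
  have hbound : ∀ z ∈ {z : ℂ | 0 ≤ z.im}, ‖cexp (I * z * r) * (I * r)‖ ≤ r := fun z hz => by
    rw [norm_mul, norm_mul, norm_I, one_mul, norm_real, Real.norm_of_nonneg hr]
    exact mul_le_of_le_one_left hr (norm_cexp_I_mul_le_one hz hr)
  simpa [dist_eq_norm] using Convex.norm_image_sub_le_of_norm_hasDerivWithin_le hderiv hbound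
    (convex_halfSpace_im_ge 0) hm hl

theorem norm_intervalIntegral_mul_le {f φ : ℝ → ℂ} {a b K : ℝ} (hf : IntegrableOn f (Ι a b))
    (hφ : ∀ t ∈ Ι a b, ‖φ t‖ ≤ K) :
    ‖∫ t in a..b, f t * φ t‖ ≤ K * ∫ t in Ι a b, ‖f t‖ := by
  refine intervalIntegral.norm_integral_le_integral_norm_uIoc.trans ?_
  rw [← integral_const_mul]
  refine integral_mono_of_nonneg (ae_of_all _ fun t => norm_nonneg _) (hf.norm.const_mul K)
    ((ae_restrict_iff' measurableSet_uIoc).2 (ae_of_all _ fun t ht => ?_))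
  show ‖f t * φ t‖ ≤ K * ‖f t‖
  rw [norm_mul, mul_comm]
  exact mul_le_mul_of_nonneg_right (hφ t ht) (norm_nonneg (f t))

theorem norm_integral_mul_cexp_le {h : ℝ → ℂ} (hh : ContDiff ℝ 1 h) {u v : ℝ} (huv : u ≤ v)
    {a b : ℂ} (ha : a ≠ 0) (hre : ∀ t ∈ Icc u v, (a * t + b).re ≤ 0) {B C : ℝ}
    (hB : ∀ t ∈ Icc u v, ‖h t‖ ≤ B) (hC : ∀ t ∈ Icc u v, ‖deriv h t‖ ≤ C) :
    ‖∫ t in u..v, h t * cexp (a * t + b)‖ ≤ (2 * B + C * (v - u)) / ‖a‖ := by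
  set w : ℝ → ℂ := fun t => a⁻¹ * cexp (a * t + b)
  have hw : ∀ t : ℝ, HasDerivAt w (cexp (a * t + b)) t := fun t => by
    have hlin : HasDerivAt (fun t : ℝ => a * t + b) a t := by
      simpa using ((hasDerivAt_id t).ofReal_comp.const_mul a).add_const b
    have := hlin.cexp.const_mul a⁻¹
    rwa [mul_left_comm, inv_mul_cancel₀ ha, mul_one] at this
  have hw_le : ∀ t ∈ Icc u v, ‖w t‖ ≤ ‖a‖⁻¹ := fun t ht => by
    simp only [w, norm_mul, norm_inv]
    rw [norm_exp]
    exact mul_le_of_le_one_right (by positivity) (Real.exp_le_one_iff.2 (hre t ht))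
  have hB0 : 0 ≤ B := (norm_nonneg _).trans (hB u ⟨le_rfl, huv⟩)
  have hC0 : 0 ≤ C := (norm_nonneg _).trans (hC u ⟨le_rfl, huv⟩)
  have hint : ‖∫ t in u..v, deriv h t * w t‖ ≤ C * ‖a‖⁻¹ * (v - u) := by
    refine (intervalIntegral.norm_integral_le_of_norm_le_const fun t ht => ?_).trans_eq
      (by rw [abs_of_nonneg (sub_nonneg.2 huv)])
    rw [uIoc_of_le huv] at ht
    rw [norm_mul]
    exact mul_le_mul (hC t (Ioc_subset_Icc_self ht)) (hw_le t (Ioc_subset_Icc_self ht))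
      (norm_nonneg _) hC0
  rw [intervalIntegral.integral_mul_deriv_eq_deriv_mul
    (fun t _ => ((hh.differentiable one_ne_zero) t).hasDerivAt) (fun t _ => hw t)
    ((hh.continuous_deriv le_rfl).intervalIntegrable _ _)
    ((by fun_prop : Continuous fun t : ℝ => cexp (a * t + b)).intervalIntegrable _ _)]
  calc ‖h v * w v - h u * w u - ∫ t in u..v, deriv h t * w t‖
      ≤ ‖h v‖ * ‖w v‖ + ‖h u‖ * ‖w u‖ + ‖∫ t in u..v, deriv h t * w t‖ := by
        refine (norm_sub_le _ _).trans ?_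
        gcongr
        refine (norm_sub_le _ _).trans_eq ?_
        rw [norm_mul (h v), norm_mul (h u)]
    _ ≤ B * ‖a‖⁻¹ + B * ‖a‖⁻¹ + C * ‖a‖⁻¹ * (v - u) := by
        gcongr
        exacts [hB v ⟨huv, le_rfl⟩, hw_le v ⟨huv, le_rfl⟩, hB u ⟨le_rfl, huv⟩,
          hw_le u ⟨le_rfl, huv⟩]
    _ = (2 * B + C * (v - u)) / ‖a‖ := by ring

theorem exists_setIntegral_Ici_norm_le {E : Type*} [NormedAddCommGroup E] {f : ℝ → E} {a : ℝ}
    (hf : IntegrableOn f (Ici a)) {ζ : ℝ} (hζ : 0 < ζ) :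
    ∃ T ≥ a, ∫ t in Ici T, ‖f t‖ ≤ ζ := by
  have hlim : Filter.Tendsto (fun T => ∫ t in Ici T, ‖f t‖) Filter.atTop (nhds 0) := by
    have := tendsto_setIntegral_of_antitone (μ := volume) (f := fun t => ‖f t‖)
      (fun T => measurableSet_Ici) (fun _ _ h => Ici_subset_Ici.2 h) ⟨a, hf.norm⟩
    rwa [iInter_eq_empty_iff.2 fun t => ⟨t + 1, by simp⟩, Measure.restrict_empty,
      integral_zero_measure] at this
  exact ((hlim.eventually (ge_mem_nhds hζ)).and (Filter.eventually_ge_atTop a)).exists.imp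
    fun T hT => ⟨hT.2, hT.1⟩

theorem MeasureTheory.IntegrableOn.exists_contDiff_setIntegral_norm_sub_le {E : Type*}
    [NormedAddCommGroup E] [NormedSpace ℝ E] [CompleteSpace E] {f : ℝ → E} {s : Set ℝ}
    (hf : IntegrableOn f s) (hs : volume s ≠ ⊤) {ε : ℝ} (hε : 0 < ε) :
    ∃ h : ℝ → E, ContDiff ℝ ∞ h ∧ ∫ t in s, ‖f t - h t‖ ≤ ε := by
  have := Measure.Regular.restrict_of_measure_ne_top hs
  obtain ⟨g, hg_supp, hfg, hg_cont, hg_int⟩ :=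
    hf.exists_hasCompactSupport_integral_sub_le (half_pos hε)
  set η := ε / 2 / (volume.real s + 1)
  have hη : 0 < η := by positivity
  obtain ⟨h, hh, hgh⟩ :=
    (hg_supp.uniformContinuous_of_continuous hg_cont).exists_contDiff_dist_le hη
  refine ⟨h, hh, ?_⟩
  have hηs : η * volume.real s ≤ ε / 2 := by
    rw [div_mul_eq_mul_div, div_le_iff₀ (by positivity)]
    nlinarith [measureReal_nonneg (μ := volume) (s := s)]
  have hfg_int : IntegrableOn (fun t => ‖f t - g t‖) s := (hf.sub hg_int).norm
  calc ∫ t in s, ‖f t - h t‖ ≤ ∫ t in s, (‖f t - g t‖ + η) := by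
        refine integral_mono_of_nonneg (ae_of_all _ fun t => norm_nonneg _)
          (hfg_int.add (integrableOn_const hs)) (ae_of_all _ fun t => ?_)
        calc ‖f t - h t‖ ≤ ‖f t - g t‖ + ‖g t - h t‖ := norm_sub_le_norm_sub_add_norm_sub _ _ _
          _ ≤ ‖f t - g t‖ + η := by
            rw [← dist_eq_norm (g t), dist_comm]; linarith [hgh t]
    _ = (∫ t in s, ‖f t - g t‖) + η * volume.real s := by
        rw [integral_add hfg_int (integrableOn_const hs), setIntegral_const,
          smul_eq_mul, mul_comm]
    _ ≤ ε := by linarith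

/-- `ψ(s, x, λ)` in the paper's notation. -/
noncomputable def psi (f : ℝ → ℂ) (s x : ℝ) (lam : ℂ) : ℂ :=
  ∫ t in min s x..max s x, f t * cexp (I * lam * |x - t|)

/-- `Ψ(λ)` in the paper's notation. -/
noncomputable def psiSup (f : ℝ → ℂ) (lam : ℂ) : ℝ :=
  ⨆ x : Ici (0 : ℝ), ⨆ s : Ici (0 : ℝ), ‖psi f s x lam‖

section psi

variable {f : ℝ → ℂ} {s x T : ℝ} {lam mu : ℂ}

theorem uIoc_min_max (s x : ℝ) : Ι (min s x) (max s x) = Ι s x := uIoc_of_le min_le_max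

theorem MeasureTheory.IntegrableOn.intervalIntegrable_mul_cexp_abs {a b : ℝ}
    (hf : IntegrableOn f (Ι a b)) (lam : ℂ) (x : ℝ) :
    IntervalIntegrable (fun t => f t * cexp (I * lam * |x - t|)) volume a b :=
  (intervalIntegrable_iff.2 hf).mul_continuousOn (by fun_prop)

theorem norm_psi_le (hf : IntegrableOn f (Ι s x)) (hl : 0 ≤ lam.im) :
    ‖psi f s x lam‖ ≤ ∫ t in Ι s x, ‖f t‖ := by
  have := norm_intervalIntegral_mul_le (K := 1) (hf.mono_set (uIoc_min_max s x).subset)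
    fun t _ => norm_cexp_I_mul_le_one hl (abs_nonneg (x - t))
  rwa [one_mul, uIoc_min_max] at this

theorem norm_integral_mul_cexp_abs_le_integral_Ici (hf : IntegrableOn f (Ici T))
    (hl : 0 ≤ lam.im) {a b : ℝ} (hab : Ι a b ⊆ Ici T) :
    ‖∫ t in a..b, f t * cexp (I * lam * |x - t|)‖ ≤ ∫ t in Ici T, ‖f t‖ := by
  refine (norm_intervalIntegral_mul_le (K := 1) (hf.mono_set hab)
    fun t _ => norm_cexp_I_mul_le_one hl (abs_nonneg (x - t))).trans ?_
  rw [one_mul]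
  exact setIntegral_mono_set hf.norm (ae_of_all _ fun t => norm_nonneg _) hab.eventuallyLE

theorem norm_psi_le_integral_Ici (hf : IntegrableOn f (Ici T)) (hl : 0 ≤ lam.im)
    (hT : T ≤ min s x) : ‖psi f s x lam‖ ≤ ∫ t in Ici T, ‖f t‖ :=
  norm_integral_mul_cexp_abs_le_integral_Ici hf hl fun _ ht =>
    hT.trans ((le_min le_rfl min_le_max).trans ht.1.le)

theorem abs_sub_eq_abs_sub_min_add {x t T : ℝ} (ht : t ≤ T) :
    |x - t| = |x - min x T| + |min x T - t| := by
  rcases le_total x T with hxT | hTx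
  · simp [min_eq_left hxT]
  · rw [min_eq_right hTx, abs_of_nonneg (sub_nonneg.2 (ht.trans hTx)),
      abs_of_nonneg (sub_nonneg.2 hTx), abs_of_nonneg (sub_nonneg.2 ht)]
    ring

theorem norm_psi_le_integral_Ici_add (hf : IntegrableOn f (Ici 0)) (hT : 0 ≤ T) (hs : 0 ≤ s)
    (hx : 0 ≤ x) (hl : 0 ≤ lam.im) :
    ‖psi f s x lam‖ ≤ (∫ t in Ici T, ‖f t‖) + ‖psi f (min s T) (min x T) lam‖ := by
  rcases le_total T (min s x) with hTa | haT
  · exact le_add_of_le_of_nonneg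
      (norm_psi_le_integral_Ici (hf.mono_set (Ici_subset_Ici.2 hT)) hl hTa) (norm_nonneg _)
  set b := min (max s x) T
  have ha0 : 0 ≤ min s x := le_min hs hx
  have hb0 : 0 ≤ b := le_min (ha0.trans min_le_max) hT
  have hmin : min (min s T) (min x T) = min s x := by
    rw [min_min_min_comm, min_self, min_eq_left haT]
  have hmax : max (min s T) (min x T) = b := (min_max_distrib_right _ _ _).symm
  have hhead : ∫ t in min s x..b, f t * cexp (I * lam * |x - t|)
      = cexp (I * lam * |x - min x T|) * psi f (min s T) (min x T) lam := by
    rw [psi, hmin, hmax, ← intervalIntegral.integral_const_mul]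
    refine intervalIntegral.integral_congr fun t ht => ?_
    have htT : t ≤ T := ht.2.trans (max_le haT (min_le_right _ _))
    simp only [abs_sub_eq_abs_sub_min_add (x := x) htT, ofReal_add, mul_add, Complex.exp_add]
    ring
  have htail : ‖∫ t in b..max s x, f t * cexp (I * lam * |x - t|)‖ ≤ ∫ t in Ici T, ‖f t‖ := by
    refine norm_integral_mul_cexp_abs_le_integral_Ici (hf.mono_set (Ici_subset_Ici.2 hT)) hl
      fun t ht => ?_
    rw [uIoc_of_le (min_le_left _ _)] at ht
    exact le_of_not_gt fun htT => ht.1.not_ge (le_min ht.2 htT.le)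
  have hsub {u v : ℝ} (hu : 0 ≤ u) (hv : 0 ≤ v) : Ι u v ⊆ Ici 0 := fun _ ht =>
    (le_min hu hv).trans ht.1.le
  rw [psi, ← intervalIntegral.integral_add_adjacent_intervals
    ((hf.mono_set (hsub ha0 hb0)).intervalIntegrable_mul_cexp_abs lam x)
    ((hf.mono_set (hsub hb0 (ha0.trans min_le_max))).intervalIntegrable_mul_cexp_abs lam x),
    hhead]
  calc _ ≤ ‖cexp (I * lam * |x - min x T|) * psi f (min s T) (min x T) lam‖
        + ‖∫ t in b..max s x, f t * cexp (I * lam * |x - t|)‖ := norm_add_le _ _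
    _ ≤ ‖psi f (min s T) (min x T) lam‖ + ∫ t in Ici T, ‖f t‖ := by
        rw [norm_mul]
        gcongr
        exact mul_le_of_le_one_left (norm_nonneg _) (norm_cexp_I_mul_le_one hl (abs_nonneg _))
    _ = (∫ t in Ici T, ‖f t‖) + ‖psi f (min s T) (min x T) lam‖ := add_comm _ _

theorem norm_psi_sub_psi_le (hf : IntegrableOn f (Ι s x)) (hs : s ∈ Icc 0 T) (hx : x ∈ Icc 0 T)
    (hl : 0 ≤ lam.im) (hm : 0 ≤ mu.im) :
    ‖psi f s x lam - psi f s x mu‖ ≤ T * dist lam mu * ∫ t in Ι s x, ‖f t‖ := by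
  rw [← uIoc_min_max] at hf ⊢
  rw [psi, psi, ← intervalIntegral.integral_sub (hf.intervalIntegrable_mul_cexp_abs lam x)
    (hf.intervalIntegrable_mul_cexp_abs mu x)]
  simp_rw [← mul_sub]
  refine norm_intervalIntegral_mul_le hf fun t ht => (norm_cexp_I_mul_sub_cexp_I_mul_le hl hm
    (abs_nonneg _)).trans (mul_le_mul_of_nonneg_right ?_ dist_nonneg)
  rw [uIoc_of_le min_le_max] at ht
  rw [abs_sub_le_iff]
  constructor <;> linarith [ht.1, ht.2, min_le_right s x, le_max_right s x, le_min hs.1 hx.1,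
    max_le hs.2 hx.2]

theorem norm_psi_le_integral_norm_sub_add {h : ℝ → ℂ} (hf : IntegrableOn f (Ι s x))
    (hh : Continuous h) (hl : 0 ≤ lam.im) :
    ‖psi f s x lam‖ ≤ (∫ t in Ι s x, ‖f t - h t‖) + ‖psi h s x lam‖ := by
  have hfh : IntegrableOn (fun t => f t - h t) (Ι s x) :=
    hf.sub (hh.integrableOn_Icc.mono_set uIoc_subset_uIcc)
  have hsplit : psi f s x lam = psi (fun t => f t - h t) s x lam + psi h s x lam := by
    rw [← uIoc_min_max] at hf hfh
    rw [psi, psi, psi, ← intervalIntegral.integral_add (hfh.intervalIntegrable_mul_cexp_abs lam x)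
      ((hh.integrableOn_Icc.mono_set uIoc_subset_uIcc).intervalIntegrable_mul_cexp_abs lam x)]
    congr 1 with t
    ring
  rw [hsplit]
  exact (norm_add_le _ _).trans (add_le_add_left (norm_psi_le hfh hl) _)

theorem norm_psi_le_of_contDiff {h : ℝ → ℂ} (hh : ContDiff ℝ 1 h) (hl : 0 ≤ lam.im)
    (hlam : lam ≠ 0) {B C : ℝ} (hB : ∀ t ∈ uIcc s x, ‖h t‖ ≤ B)
    (hC : ∀ t ∈ uIcc s x, ‖deriv h t‖ ≤ C) :
    ‖psi h s x lam‖ ≤ (2 * B + C * |x - s|) / ‖lam‖ := by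
  have hIlam : I * lam ≠ 0 := mul_ne_zero I_ne_zero hlam
  have hre (u v : ℝ) (huv : u ≤ v) : (I * lam * (v - u)).re ≤ 0 := by
    simp only [mul_re, mul_im, I_re, I_im, sub_re, sub_im, ofReal_re, ofReal_im]
    nlinarith
  rcases le_total s x with hsx | hxs
  · have hpsi : psi h s x lam = ∫ t in s..x, h t * cexp (-(I * lam) * t + I * lam * x) := by
      rw [psi, min_eq_left hsx, max_eq_right hsx]
      refine intervalIntegral.integral_congr fun t ht => ?_
      rw [uIcc_of_le hsx] at ht
      rw [abs_of_nonneg (sub_nonneg.2 ht.2)]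
      push_cast
      ring_nf
    rw [hpsi, abs_of_nonneg (sub_nonneg.2 hsx)]
    rw [uIcc_of_le hsx] at hB hC
    convert norm_integral_mul_cexp_le hh hsx (neg_ne_zero.2 hIlam) (fun t ht => ?_) hB hC using 2
    · simp
    · convert hre t x ht.2 using 2
      ring
  · have hpsi : psi h s x lam = ∫ t in x..s, h t * cexp (I * lam * t + -(I * lam * x)) := by
      rw [psi, min_eq_right hxs, max_eq_left hxs]
      refine intervalIntegral.integral_congr fun t ht => ?_
      rw [uIcc_of_le hxs] at ht
      rw [abs_of_nonpos (sub_nonpos.2 ht.1)]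
      push_cast
      ring_nf
    rw [hpsi, abs_sub_comm, abs_of_nonneg (sub_nonneg.2 hxs)]
    rw [uIcc_of_ge hxs] at hB hC
    convert norm_integral_mul_cexp_le hh hxs hIlam (fun t ht => ?_) hB hC using 2
    · simp
    · convert hre x t ht.1 using 2
      ring

end psi

section psiSup

variable {f : ℝ → ℂ} {T : ℝ} {lam mu : ℂ}

theorem psiSup_le {c : ℝ} (h : ∀ s x, 0 ≤ s → 0 ≤ x → ‖psi f s x lam‖ ≤ c) : psiSup f lam ≤ c :=
  ciSup_le fun x => ciSup_le fun s => h s x s.2 x.2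

theorem norm_psi_le_psiSup (hf : IntegrableOn f (Ici 0)) (hl : 0 ≤ lam.im) {s x : ℝ} (hs : 0 ≤ s)
    (hx : 0 ≤ x) : ‖psi f s x lam‖ ≤ psiSup f lam := by
  have hbound (s x : Ici (0 : ℝ)) : ‖psi f s x lam‖ ≤ ∫ t in Ici 0, ‖f t‖ :=
    norm_psi_le_integral_Ici hf hl (le_min s.2 x.2)
  refine (le_ciSup ⟨_, forall_mem_range.2 (hbound · ⟨x, hx⟩)⟩ (⟨s, hs⟩ : Ici (0 : ℝ))).trans
    (le_ciSup (f := fun x : Ici (0 : ℝ) => ⨆ s : Ici (0 : ℝ), ‖psi f s x lam‖)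
      ⟨_, forall_mem_range.2 fun x => ciSup_le (hbound · x)⟩ ⟨x, hx⟩)

theorem psiSup_le_psiSup_add (hf : IntegrableOn f (Ici 0)) (hT : 0 ≤ T) (hl : 0 ≤ lam.im)
    (hm : 0 ≤ mu.im) :
    psiSup f lam ≤ psiSup f mu + (∫ t in Ici T, ‖f t‖) + T * dist lam mu * ∫ t in Ici 0, ‖f t‖ := by
  refine psiSup_le fun s x hs hx => ?_
  have hs' : min s T ∈ Icc 0 T := ⟨le_min hs hT, min_le_right _ _⟩
  have hx' : min x T ∈ Icc 0 T := ⟨le_min hx hT, min_le_right _ _⟩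
  have hsub : Ι (min s T) (min x T) ⊆ Ici 0 := fun _ ht => (le_min hs'.1 hx'.1).trans ht.1.le
  calc ‖psi f s x lam‖ ≤ (∫ t in Ici T, ‖f t‖) + ‖psi f (min s T) (min x T) lam‖ :=
        norm_psi_le_integral_Ici_add hf hT hs hx hl
    _ ≤ (∫ t in Ici T, ‖f t‖) + (‖psi f (min s T) (min x T) mu‖
          + T * dist lam mu * ∫ t in Ι (min s T) (min x T), ‖f t‖) := by
        refine add_le_add le_rfl
          ((norm_le_norm_add_norm_sub' _ (psi f (min s T) (min x T) mu)).trans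
          (add_le_add le_rfl (norm_psi_sub_psi_le (hf.mono_set hsub) hs' hx' hl hm)))
    _ ≤ (∫ t in Ici T, ‖f t‖) + (psiSup f mu + T * dist lam mu * ∫ t in Ici 0, ‖f t‖) := by
        refine add_le_add le_rfl (add_le_add (norm_psi_le_psiSup hf hm hs'.1 hx'.1) ?_)
        exact mul_le_mul_of_nonneg_left (setIntegral_mono_set hf.norm
          (ae_of_all _ fun t => norm_nonneg _) hsub.eventuallyLE) (by positivity)
    _ = _ := by ring

theorem uniformContinuousOn_psiSup (hf : IntegrableOn f (Ici 0)) :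
    UniformContinuousOn (psiSup f) {lam : ℂ | 0 ≤ lam.im} := by
  refine Metric.uniformContinuousOn_iff.2 fun ε hε => ?_
  obtain ⟨T, hT, htail⟩ := exists_setIntegral_Ici_norm_le hf (by positivity : 0 < ε / 3)
  set M := ∫ t in Ici 0, ‖f t‖
  have hM : 0 ≤ M := integral_nonneg fun t => norm_nonneg _
  refine ⟨ε / 3 / (T * M + 1), by positivity, fun lam hl mu hm hd => ?_⟩
  have hlip : T * dist lam mu * M ≤ ε / 3 := by
    rw [lt_div_iff₀ (by positivity)] at hd
    nlinarith [mul_nonneg hT hM, dist_nonneg (x := lam) (y := mu)]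
  have h₁ := psiSup_le_psiSup_add hf hT hl hm
  have h₂ := psiSup_le_psiSup_add hf hT hm hl
  rw [dist_comm] at h₂
  rw [Real.dist_eq, abs_sub_lt_iff]
  constructor <;> linarith

theorem psiSup_le_of_contDiff (hf : IntegrableOn f (Ici 0)) (hT : 0 ≤ T) {h : ℝ → ℂ}
    (hh : ContDiff ℝ 1 h) {B C : ℝ} (hB : ∀ t ∈ Icc 0 T, ‖h t‖ ≤ B)
    (hC : ∀ t ∈ Icc 0 T, ‖deriv h t‖ ≤ C) (hl : 0 ≤ lam.im) (hlam : lam ≠ 0) :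
    psiSup f lam ≤
      (∫ t in Ici T, ‖f t‖) + (∫ t in Icc 0 T, ‖f t - h t‖) + (2 * B + C * T) / ‖lam‖ := by
  refine psiSup_le fun s x hs hx => ?_
  have hs' : min s T ∈ Icc 0 T := ⟨le_min hs hT, min_le_right _ _⟩
  have hx' : min x T ∈ Icc 0 T := ⟨le_min hx hT, min_le_right _ _⟩
  have hsub : uIcc (min s T) (min x T) ⊆ Icc 0 T := uIcc_subset_Icc hs' hx'
  have hcont := hh.continuous
  calc ‖psi f s x lam‖ ≤ (∫ t in Ici T, ‖f t‖) + ‖psi f (min s T) (min x T) lam‖ :=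
        norm_psi_le_integral_Ici_add hf hT hs hx hl
    _ ≤ (∫ t in Ici T, ‖f t‖) + ((∫ t in Ι (min s T) (min x T), ‖f t - h t‖)
          + ‖psi h (min s T) (min x T) lam‖) :=
        add_le_add le_rfl (norm_psi_le_integral_norm_sub_add
          (hf.mono_set (uIoc_subset_uIcc.trans (hsub.trans Icc_subset_Ici_self))) hcont hl)
    _ ≤ (∫ t in Ici T, ‖f t‖) + ((∫ t in Icc 0 T, ‖f t - h t‖)
          + (2 * B + C * |min x T - min s T|) / ‖lam‖) := by
        refine add_le_add le_rfl (add_le_add ?_ (norm_psi_le_of_contDiff hh hl hlam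
          (fun t ht => hB t (hsub ht)) (fun t ht => hC t (hsub ht))))
        have hfh : IntegrableOn (fun t => ‖f t - h t‖) (Icc 0 T) :=
          ((hf.mono_set Icc_subset_Ici_self).sub hcont.integrableOn_Icc).norm
        exact setIntegral_mono_set hfh (ae_of_all _ fun t => norm_nonneg _)
          (uIoc_subset_uIcc.trans hsub).eventuallyLE
    _ ≤ (∫ t in Ici T, ‖f t‖) + (∫ t in Icc 0 T, ‖f t - h t‖) + (2 * B + C * T) / ‖lam‖ := by
        rw [← add_assoc]
        have hC0 : 0 ≤ C := (norm_nonneg _).trans (hC 0 ⟨le_rfl, hT⟩)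
        gcongr
        exact abs_sub_le_iff.2 ⟨by linarith [hx'.2, hs'.1], by linarith [hs'.2, hx'.1]⟩

theorem exists_psiSup_le (hf : IntegrableOn f (Ici 0)) :
    ∀ ε > 0, ∃ R : ℝ, ∀ lam : ℂ, 0 ≤ lam.im → R ≤ ‖lam‖ → psiSup f lam ≤ ε := by
  intro ε hε
  obtain ⟨T, hT, htail⟩ := exists_setIntegral_Ici_norm_le hf (by positivity : 0 < ε / 3)
  obtain ⟨h, hh, happrox⟩ :=
    (hf.mono_set Icc_subset_Ici_self).exists_contDiff_setIntegral_norm_sub_le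
    (measure_Icc_lt_top (a := 0) (b := T)).ne (by positivity : 0 < ε / 3)
  have hh1 : ContDiff ℝ 1 h := hh.of_le (by simp)
  obtain ⟨B, hB⟩ := isCompact_Icc.exists_bound_of_continuousOn (s := Icc 0 T)
    hh1.continuous.continuousOn
  obtain ⟨C, hC⟩ := isCompact_Icc.exists_bound_of_continuousOn (s := Icc 0 T)
    (hh1.continuous_deriv le_rfl).continuousOn
  refine ⟨max 1 ((2 * B + C * T) / (ε / 3)), fun lam hl hR => ?_⟩
  have hlam : 0 < ‖lam‖ := by linarith [le_max_left 1 ((2 * B + C * T) / (ε / 3))]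
  have hdecay : (2 * B + C * T) / ‖lam‖ ≤ ε / 3 := by
    have hR' := (le_max_right 1 ((2 * B + C * T) / (ε / 3))).trans hR
    rw [div_le_iff₀ (by positivity)] at hR'
    rw [div_le_iff₀ hlam]
    linarith
  linarith [psiSup_le_of_contDiff hf hT hh1 hB hC hl (norm_pos_iff.1 hlam)]

end psiSup

theorem stmt5 (f : ℝ → ℂ) (hf1 : IntegrableOn f (Ici 0))
    (Ψ : ℂ → ℝ)
    (hΨ : ∀ lam : ℂ, Ψ lam =
      ⨆ x : Ici (0 : ℝ), ⨆ s : Ici (0 : ℝ),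
        ‖∫ t in min s.1 x.1..max s.1 x.1,
          f t * Complex.exp (Complex.I * lam * |x.1 - t|)‖) :
    UniformContinuousOn Ψ {lam : ℂ | 0 ≤ lam.im} ∧
    (∀ ε > 0, ∃ R : ℝ, ∀ lam : ℂ, 0 ≤ lam.im → R ≤ ‖lam‖ → Ψ lam ≤ ε) := by
  obtain rfl : Ψ = psiSup f := funext hΨ
  exact ⟨uniformContinuousOn_psiSup hf1, exists_psiSup_le hf1⟩
end

section
/- Let n ≥ 3, m ∈ {2,...,n} be odd, and define b_{2s+1} = exp(2πis/n), b_{2p} = exp(-2πip/n) as the n-th roots of unity with the standard numeration, ω = b_m·exp(-πi/n), and ζ = π/(2n). Then for every λ = e^{iτ} with τ ∈ [ζ, ζ + π/n], one has Re(λ b_j) ≥ Re(λ ω) for all j = 1, ..., m-1 and Re(λ ω) ≥ Re(λ b_l) for all l = m, ..., n. -/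
open Complex Real

private lemma cosle' {φ θ : ℝ} (h : |θ| ≤ φ) (hφ : φ ≤ Real.pi) :
    Real.cos φ ≤ Real.cos θ := by
  rw [← Real.cos_abs θ]
  exact Real.cos_le_cos_of_nonneg_of_le_pi (abs_nonneg θ) hφ h

private lemma cosge' {φ θ : ℝ} (hφ0 : 0 ≤ φ) (h1 : φ ≤ |θ|) (h2 : |θ| ≤ 2 * Real.pi - φ) :
    Real.cos θ ≤ Real.cos φ := by
  rw [← Real.cos_abs θ]
  rcases le_total |θ| Real.pi with h | h
  · exact Real.cos_le_cos_of_nonneg_of_le_pi hφ0 h h1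
  · have hc : Real.cos |θ| = Real.cos (2 * Real.pi - |θ|) := by
      rw [Real.cos_two_pi_sub]
    rw [hc]
    exact Real.cos_le_cos_of_nonneg_of_le_pi hφ0 (by linarith [Real.pi_pos]) (by linarith)

set_option maxHeartbeats 1000000 in
theorem stmt8 (n : ℕ) (hn : 3 ≤ n) (m : ℕ) (hm2 : 2 ≤ m) (hmn : m ≤ n)
    (hmodd : Odd m) (b : ℕ → ℂ)
    (hodd : ∀ s : ℕ, s ≤ (n - 1) / 2 →
      b (2 * s + 1) = Complex.exp (2 * Real.pi * Complex.I * s / n))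
    (heven : ∀ p : ℕ, 1 ≤ p → p ≤ n / 2 →
      b (2 * p) = Complex.exp (-(2 * Real.pi * Complex.I * p) / n))
    (ω : ℂ) (hω : ω = b m * Complex.exp (-(Real.pi * Complex.I) / n))
    (ζ : ℝ) (hζ : ζ = Real.pi / (2 * n))
    (τ : ℝ) (hτ0 : ζ ≤ τ) (hτ1 : τ ≤ ζ + Real.pi / n)
    (lam : ℂ) (hlam : lam = Complex.exp (Complex.I * τ)) :
    (∀ j : ℕ, 1 ≤ j → j ≤ m - 1 → (lam * ω).re ≤ (lam * b j).re) ∧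
    (∀ l : ℕ, m ≤ l → l ≤ n → (lam * b l).re ≤ (lam * ω).re) := by
  obtain ⟨k, hk⟩ := hmodd
  have hk1 : 1 ≤ k := by omega
  have hkn : 2 * k + 1 ≤ n := by omega
  have hN : (0:ℝ) < n := by
    have : 0 < n := by omega
    exact_mod_cast this
  obtain ⟨v, hv⟩ : ∃ v : ℝ, v = Real.pi / n := ⟨_, rfl⟩
  have hv0 : 0 < v := by rw [hv]; positivity
  have hπ : Real.pi = n * v := by rw [hv]; field_simp
  have hζv : ζ = v / 2 := by rw [hζ, hv]; ring
  have hτa : v / 2 ≤ τ := by rw [hζv] at hτ0; exact hτ0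
  have hτb : τ ≤ 3 * v / 2 := by rw [hζv, ← hv] at hτ1; linarith
  have hK : (1:ℝ) ≤ (k:ℝ) := by exact_mod_cast hk1
  have hKN : 2 * (k:ℝ) + 1 ≤ (n:ℝ) := by exact_mod_cast hkn
  have key : ∀ (θ : ℝ) (z : ℂ), z = Complex.exp (↑θ * Complex.I) →
      (lam * z).re = Real.cos (τ + θ) := by
    intro θ z hz
    rw [hlam, hz, ← Complex.exp_add,
      show Complex.I * ↑τ + ↑θ * Complex.I = ↑(τ + θ) * Complex.I by push_cast; ring,
      Complex.exp_ofReal_mul_I_re]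
  have hbm : b m = Complex.exp (↑(2 * (k:ℝ) * v) * Complex.I) := by
    rw [hk, hodd k (by omega)]
    congr 1
    rw [hv]; push_cast; ring
  have hωe : ω = Complex.exp (↑((2 * (k:ℝ) - 1) * v) * Complex.I) := by
    rw [hω, hbm, ← Complex.exp_add]
    congr 1
    rw [hv]; push_cast; ring
  have hreω : (lam * ω).re = Real.cos (τ + (2 * (k:ℝ) - 1) * v) := key _ _ hωe
  have hφ0 : 0 ≤ τ + (2 * (k:ℝ) - 1) * v := by
    linarith [mul_nonneg (show (0:ℝ) ≤ 2 * (k:ℝ) - 1 by linarith) hv0.le]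
  have hφπ : τ + (2 * (k:ℝ) - 1) * v ≤ Real.pi := by
    linarith [mul_le_mul_of_nonneg_right (show 2 * (k:ℝ) - 1 ≤ (n:ℝ) - 2 by linarith) hv0.le]
  constructor
  · intro j hj1 hj2
    rw [hreω]
    rcases Nat.even_or_odd j with ⟨p, hp⟩ | ⟨s, hs⟩
    · have hp1 : 1 ≤ p := by omega
      have hpn : p ≤ n / 2 := by omega
      have hpk : p ≤ k := by omega
      have hbj : b j = Complex.exp (↑(-(2 * (p:ℝ) * v)) * Complex.I) := by
        rw [show j = 2 * p by omega, heven p hp1 hpn]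
        congr 1
        rw [hv]; push_cast; ring
      rw [key _ _ hbj]
      apply cosle' _ hφπ
      have hpk' : (p:ℝ) ≤ (k:ℝ) := by exact_mod_cast hpk
      have hp1' : (1:ℝ) ≤ (p:ℝ) := by exact_mod_cast hp1
      rw [abs_le]
      constructor
      · linarith [mul_le_mul_of_nonneg_right hpk' hv0.le]
      · linarith [mul_nonneg (show (0:ℝ) ≤ (p:ℝ) by linarith) hv0.le,
          mul_nonneg (show (0:ℝ) ≤ 2 * (k:ℝ) - 1 by linarith) hv0.le]
    · have hsk : s + 1 ≤ k := by omega
      have hs2 : s ≤ (n - 1) / 2 := by omega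
      have hbj : b j = Complex.exp (↑(2 * (s:ℝ) * v) * Complex.I) := by
        rw [hs, hodd s hs2]
        congr 1
        rw [hv]; push_cast; ring
      rw [key _ _ hbj]
      apply cosle' _ hφπ
      have hsk' : (s:ℝ) + 1 ≤ (k:ℝ) := by exact_mod_cast hsk
      rw [abs_le]
      constructor
      · linarith [mul_nonneg (show (0:ℝ) ≤ (s:ℝ) by positivity) hv0.le,
          mul_nonneg (show (0:ℝ) ≤ 2 * (k:ℝ) - 1 by linarith) hv0.le]
      · linarith [mul_le_mul_of_nonneg_right (show (s:ℝ) ≤ (k:ℝ) - 1 by linarith) hv0.le]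
  · intro l hl1 hl2
    rw [hreω]
    rcases Nat.even_or_odd l with ⟨p, hp⟩ | ⟨s, hs⟩
    · have hp1 : 1 ≤ p := by omega
      have hpn : p ≤ n / 2 := by omega
      have hpk : k + 1 ≤ p := by omega
      have h2pn : 2 * p ≤ n := by omega
      have hbl : b l = Complex.exp (↑(-(2 * (p:ℝ) * v)) * Complex.I) := by
        rw [show l = 2 * p by omega, heven p hp1 hpn]
        congr 1
        rw [hv]; push_cast; ring
      rw [key _ _ hbl]
      apply cosge' hφ0
      · have hpk' : (k:ℝ) + 1 ≤ (p:ℝ) := by exact_mod_cast hpk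
        refine le_trans ?_ (neg_le_abs _)
        linarith [mul_le_mul_of_nonneg_right hpk' hv0.le]
      · have hpk' : (k:ℝ) + 1 ≤ (p:ℝ) := by exact_mod_cast hpk
        have h2pn' : 2 * (p:ℝ) ≤ (n:ℝ) := by exact_mod_cast h2pn
        rw [abs_le]
        constructor
        · linarith [mul_le_mul_of_nonneg_right h2pn' hv0.le,
            mul_le_mul_of_nonneg_right (show 2 * (k:ℝ) - 1 ≤ (n:ℝ) - 2 by linarith) hv0.le]
        · linarith [mul_nonneg (show (0:ℝ) ≤ (p:ℝ) by linarith) hv0.le,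
            mul_le_mul_of_nonneg_right (show (3:ℝ) ≤ (n:ℝ) by exact_mod_cast hn) hv0.le,
            mul_le_mul_of_nonneg_right (show 2 * (k:ℝ) - 1 ≤ (n:ℝ) - 2 by linarith) hv0.le]
    · have hks : k ≤ s := by omega
      have hs2 : s ≤ (n - 1) / 2 := by omega
      have h2s : 2 * s + 1 ≤ n := by omega
      have hbl : b l = Complex.exp (↑(2 * (s:ℝ) * v) * Complex.I) := by
        rw [hs, hodd s hs2]
        congr 1
        rw [hv]; push_cast; ring
      rw [key _ _ hbl]
      apply cosge' hφ0
      · have hks' : (k:ℝ) ≤ (s:ℝ) := by exact_mod_cast hks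
        refine le_trans ?_ (le_abs_self _)
        linarith [mul_le_mul_of_nonneg_right hks' hv0.le]
      · have h2s' : 2 * (s:ℝ) + 1 ≤ (n:ℝ) := by exact_mod_cast h2s
        rw [abs_le]
        constructor
        · linarith [mul_nonneg (show (0:ℝ) ≤ (s:ℝ) by positivity) hv0.le,
            mul_le_mul_of_nonneg_right (show 2 * (k:ℝ) - 1 ≤ (n:ℝ) - 2 by linarith) hv0.le]
        · linarith [mul_le_mul_of_nonneg_right (show 2 * (s:ℝ) ≤ (n:ℝ) - 1 by linarith) hv0.le,
            mul_le_mul_of_nonneg_right (show 2 * (k:ℝ) - 1 ≤ (n:ℝ) - 2 by linarith) hv0.le]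
end
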